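/- Let f ∈ H¹ of the half line with weight: suppose f : [0,∞) → ℝ is absolutely continuous, f(y) → 0 as y → ∞, and ∫_0^∞ (f')² ρ_j < ∞ where ρ_j/ρ_n is non-increasing for j ≥ n. Then sup_{y} (ρ_j(y)/ρ_n(y))^{1/2} |f(y) - f(0)| ≤ C_{m-n} (∫_0^∞ (f')² ρ_j)^{1/2} for n < m - 1/2, where C_{m-n} = (2(m-n)-1)^{-1/2}. -/

import Mathlib

open MeasureTheory

/-- The weight functions `ρ_j(y) = (1+y)^{2m} ∏_{k=1}^j (1 + y/k^α)^{-2}`. -/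
noncomputable def rho (m α : ℝ) (j : ℕ) (y : ℝ) : ℝ :=
  (1 + y) ^ (2 * m) * ∏ k ∈ Finset.Icc 1 j, ((1 + y / (k : ℝ) ^ α) ^ 2)⁻¹

/-! By the fundamental theorem of calculus and the Cauchy–Schwarz inequality with weight `ρ_j`,
`|f y - f 0|² ≤ (∫₀^y f'² ρ_j) (∫₀^y ρ_j⁻¹)`. Since `ρ_j / ρ_n` is non-increasing, for `z ≤ y`
we have `(ρ_j / ρ_n)(y) ρ_j(z)⁻¹ ≤ ρ_n(z)⁻¹ ≤ (1 + z)^(2n - 2m)`, whose integral over `[0, ∞)`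
is `1 / (2(m - n) - 1)`. -/

theorem memLp_two_sqrt_of_integrable {X : Type*} [MeasurableSpace X] {μ : Measure X} {h : X → ℝ}
    (hh : Integrable h μ) (h0 : 0 ≤ᵐ[μ] h) : MemLp (fun x => √(h x)) 2 μ := by
  refine (memLp_two_iff_integrable_sq
    (Real.continuous_sqrt.comp_aestronglyMeasurable hh.aestronglyMeasurable)).2 ?_
  exact hh.congr (h0.mono fun x hx => (Real.sq_sqrt hx).symm)

theorem integral_abs_le_sqrt_integral_sq_mul_mul_sqrt_integral_inv {X : Type*}
    [MeasurableSpace X] {μ : Measure X} {g w : X → ℝ} (hw : ∀ᵐ x ∂μ, 0 < w x)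
    (hgw : Integrable (fun x => g x ^ 2 * w x) μ) (hw_inv : Integrable (fun x => (w x)⁻¹) μ) :
    ∫ x, |g x| ∂μ ≤ √(∫ x, g x ^ 2 * w x ∂μ) * √(∫ x, (w x)⁻¹ ∂μ) := by
  have hgw0 : 0 ≤ᵐ[μ] fun x => g x ^ 2 * w x :=
    hw.mono fun x hx => mul_nonneg (sq_nonneg _) hx.le
  have hw_inv0 : 0 ≤ᵐ[μ] fun x => (w x)⁻¹ := hw.mono fun x hx => inv_nonneg.2 hx.le
  -- `|g| = √(g² w) · √(w⁻¹)` is the product of two `L²` functions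
  have hsplit : ∫ x, |g x| ∂μ = ∫ x, √(g x ^ 2 * w x) * √((w x)⁻¹) ∂μ := by
    refine integral_congr_ae (hw.mono fun x hx => ?_)
    simp only
    rw [← Real.sqrt_mul (mul_nonneg (sq_nonneg _) hx.le), mul_assoc, mul_inv_cancel₀ hx.ne',
      mul_one, Real.sqrt_sq_eq_abs]
  have hsq {h : X → ℝ} (h0 : 0 ≤ᵐ[μ] h) : ∫ x, √(h x) ^ (2 : ℝ) ∂μ = ∫ x, h x ∂μ :=
    integral_congr_ae (h0.mono fun x hx => by simp only; rw [Real.rpow_two, Real.sq_sqrt hx])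
  have holder := integral_mul_le_Lp_mul_Lq_of_nonneg Real.HolderConjugate.two_two
    (Filter.Eventually.of_forall fun x => Real.sqrt_nonneg _)
    (Filter.Eventually.of_forall fun x => Real.sqrt_nonneg _)
    (by simpa only [ENNReal.ofReal_ofNat] using memLp_two_sqrt_of_integrable hgw hgw0)
    (by simpa only [ENNReal.ofReal_ofNat] using memLp_two_sqrt_of_integrable hw_inv hw_inv0)
  rwa [hsq hgw0, hsq hw_inv0, ← Real.sqrt_eq_rpow, ← Real.sqrt_eq_rpow, ← hsplit] at holder

theorem abs_sub_le_integral_abs_deriv {f : ℝ → ℝ} (hf : ContDiff ℝ 1 f) {a b : ℝ} (hab : a ≤ b) :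
    |f b - f a| ≤ ∫ x in a..b, |deriv f x| := by
  rw [← intervalIntegral.integral_deriv_eq_sub
    (fun x _ => (hf.differentiable one_ne_zero).differentiableAt)
    ((hf.continuous_deriv le_rfl).intervalIntegrable a b)]
  exact intervalIntegral.abs_integral_le_integral_abs hab

theorem integral_one_add_rpow_le {c : ℝ} (hc : c < -1) {y : ℝ} (hy : 0 ≤ y) :
    ∫ z in (0 : ℝ)..y, (1 + z) ^ c ≤ -1 / (c + 1) := by
  have h0 : (0 : ℝ) ∉ Set.uIcc 1 (1 + y) := by
    rw [Set.uIcc_of_le (by linarith)]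
    exact fun h => by linarith [h.1]
  rw [intervalIntegral.integral_comp_add_left (fun x => x ^ c), add_zero,
    integral_rpow (Or.inr ⟨hc.ne, h0⟩), Real.one_rpow]
  refine div_le_div_of_nonpos_of_le (by linarith) ?_
  linarith [Real.rpow_nonneg (by linarith : (0 : ℝ) ≤ 1 + y) (c + 1)]

section Weight

variable {m α : ℝ}

theorem rho_pos (j : ℕ) {y : ℝ} (hy : 0 ≤ y) : 0 < rho m α j y := by
  unfold rho
  have : 0 < 1 + y := by linarith
  positivity

theorem rho_continuousOn (j : ℕ) : ContinuousOn (rho m α j) (Set.Ici 0) := by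
  unfold rho
  fun_prop (disch := intro y hy; simp only [Set.mem_Ici] at hy; positivity)

theorem inv_rho_continuousOn (j : ℕ) :
    ContinuousOn (fun z => (rho m α j z)⁻¹) (Set.Ici 0) :=
  (rho_continuousOn j).inv₀ fun _ hz => (rho_pos j hz).ne'

theorem rho_div_rho {n j : ℕ} (hnj : n ≤ j) {y : ℝ} (hy : 0 ≤ y) :
    rho m α j y / rho m α n y = ∏ k ∈ Finset.Ioc n j, ((1 + y / (k : ℝ) ^ α) ^ 2)⁻¹ := by
  have hI (i : ℕ) : Finset.Icc 1 i = Finset.Ioc 0 i := Finset.Icc_add_one_left_eq_Ioc 0 i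
  rw [div_eq_iff (rho_pos n hy).ne', rho, rho, hI, hI,
    ← Finset.prod_Ioc_consecutive _ (Nat.zero_le n) hnj]
  ring

theorem rho_div_rho_antitoneOn {n j : ℕ} (hnj : n ≤ j) :
    AntitoneOn (fun y => rho m α j y / rho m α n y) (Set.Ici 0) := by
  intro z hz y hy hzy
  simp only [rho_div_rho hnj hz, rho_div_rho hnj hy]
  have hz' : (0 : ℝ) ≤ z := hz
  refine Finset.prod_le_prod (fun k _ => by positivity) fun k _ => ?_
  have : 0 < 1 + z / (k : ℝ) ^ α := by positivity
  gcongr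

theorem inv_rho_le_one_add_rpow (hα : 0 ≤ α) (n : ℕ) {z : ℝ} (hz : 0 ≤ z) :
    (rho m α n z)⁻¹ ≤ (1 + z) ^ (2 * (n : ℝ) - 2 * m) := by
  have hz1 : 0 < 1 + z := by linarith
  calc (rho m α n z)⁻¹
        = ((1 + z) ^ (2 * m))⁻¹ * ∏ k ∈ Finset.Icc 1 n, (1 + z / (k : ℝ) ^ α) ^ 2 := by
        rw [rho, mul_inv, Finset.prod_inv_distrib, inv_inv]
    _ ≤ ((1 + z) ^ (2 * m))⁻¹ * ∏ k ∈ Finset.Icc 1 n, (1 + z) ^ 2 := by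
        gcongr with k hk
        exact div_le_self hz (Real.one_le_rpow (by exact_mod_cast (Finset.mem_Icc.1 hk).1) hα)
    _ = (1 + z) ^ (2 * (n : ℝ) - 2 * m) := by
        rw [Finset.prod_const, Nat.card_Icc, add_tsub_cancel_right, ← pow_mul,
          Real.rpow_sub hz1, ← Real.rpow_natCast]
        push_cast
        ring

theorem rho_div_rho_mul_integral_inv_rho_le (hα : 0 ≤ α) {n j : ℕ} (hnj : n ≤ j)
    (hn : (n : ℝ) < m - 1 / 2) {y : ℝ} (hy : 0 ≤ y) :
    rho m α j y / rho m α n y * ∫ z in (0 : ℝ)..y, (rho m α j z)⁻¹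
      ≤ 1 / (2 * (m - n) - 1) := by
  have hinv : ContinuousOn (fun z => (rho m α j z)⁻¹) (Set.Icc 0 y) :=
    (inv_rho_continuousOn j).mono Set.Icc_subset_Ici_self
  have hpow : ContinuousOn (fun z : ℝ => (1 + z) ^ (2 * (n : ℝ) - 2 * m)) (Set.Icc 0 y) :=
    ContinuousOn.rpow_const (by fun_prop) fun z hz => Or.inl (by linarith [hz.1])
  rw [← intervalIntegral.integral_const_mul]
  calc _ ≤ ∫ z in (0 : ℝ)..y, (1 + z) ^ (2 * (n : ℝ) - 2 * m) := by
        refine intervalIntegral.integral_mono_on hy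
          ((hinv.intervalIntegrable_of_Icc hy).const_mul _) (hpow.intervalIntegrable_of_Icc hy) fun z hz => ?_
        have hρj : 0 < rho m α j z := rho_pos j hz.1
        calc rho m α j y / rho m α n y * (rho m α j z)⁻¹
            ≤ rho m α j z / rho m α n z * (rho m α j z)⁻¹ :=
              mul_le_mul_of_nonneg_right
                (rho_div_rho_antitoneOn hnj hz.1 (hz.1.trans hz.2) hz.2) (inv_nonneg.2 hρj.le)
          _ = (rho m α n z)⁻¹ := by field_simp
          _ ≤ _ := inv_rho_le_one_add_rpow hα n hz.1
    _ ≤ -1 / (2 * (n : ℝ) - 2 * m + 1) := integral_one_add_rpow_le (by linarith) hy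
    _ = 1 / (2 * (m - n) - 1) := by rw [← neg_div_neg_eq]; ring_nf

end Weight

theorem stmt15_general (m α : ℝ) (hα : 0 ≤ α) (n j : ℕ) (hnj : n ≤ j)
    (hn : (n : ℝ) < m - 1/2)
    (f : ℝ → ℝ) (hf : ContDiff ℝ 1 f)
    (hint : Integrable (fun z => (deriv f z) ^ 2 * rho m α j z)
      (volume.restrict (Set.Ioi 0))) :
    ∀ y : ℝ, 0 ≤ y →
      Real.sqrt (rho m α j y / rho m α n y) * |f y - f 0|
        ≤ Real.sqrt (1 / (2 * (m - (n : ℝ)) - 1)) *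
          Real.sqrt (∫ z in Set.Ioi (0:ℝ), (deriv f z) ^ 2 * rho m α j z) := by
  intro y hy
  have hρ : ∀ᵐ z ∂volume.restrict (Set.Ioc 0 y), 0 < rho m α j z :=
    (ae_restrict_mem measurableSet_Ioc).mono fun z hz => rho_pos j hz.1.le
  have hinv : IntegrableOn (fun z => (rho m α j z)⁻¹) (Set.Ioc 0 y) :=
    ((inv_rho_continuousOn j).mono Set.Icc_subset_Ici_self).integrableOn_Icc.mono_set
      Set.Ioc_subset_Icc_self
  have hCS := integral_abs_le_sqrt_integral_sq_mul_mul_sqrt_integral_inv hρ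
    (IntegrableOn.mono_set hint Set.Ioc_subset_Ioi_self) hinv
  rw [← intervalIntegral.integral_of_le hy, ← intervalIntegral.integral_of_le hy,
    ← intervalIntegral.integral_of_le hy] at hCS
  have hweight := rho_div_rho_mul_integral_inv_rho_le hα hnj hn hy
  have henergy : ∫ z in (0 : ℝ)..y, deriv f z ^ 2 * rho m α j z
      ≤ ∫ z in Set.Ioi (0 : ℝ), deriv f z ^ 2 * rho m α j z := by
    rw [intervalIntegral.integral_of_le hy]
    refine setIntegral_mono_set hint ?_ Set.Ioc_subset_Ioi_self.eventuallyLE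
    exact (ae_restrict_mem measurableSet_Ioi).mono fun z hz =>
      mul_nonneg (sq_nonneg _) (rho_pos j (le_of_lt hz)).le
  have hR : 0 ≤ rho m α j y / rho m α n y := div_nonneg (rho_pos j hy).le (rho_pos n hy).le
  calc √(rho m α j y / rho m α n y) * |f y - f 0|
      ≤ √(rho m α j y / rho m α n y) * (√(∫ z in (0 : ℝ)..y, deriv f z ^ 2 * rho m α j z)
          * √(∫ z in (0 : ℝ)..y, (rho m α j z)⁻¹)) := by
        gcongr
        exact (abs_sub_le_integral_abs_deriv hf hy).trans hCS
    _ = √(rho m α j y / rho m α n y * ∫ z in (0 : ℝ)..y, (rho m α j z)⁻¹)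
          * √(∫ z in (0 : ℝ)..y, deriv f z ^ 2 * rho m α j z) := by
        rw [Real.sqrt_mul hR]; ring
    _ ≤ _ := by gcongr

theorem stmt15 (m α : ℝ) (hα : 0 ≤ α) (n j : ℕ) (hnj : n ≤ j)
    (hn : (n : ℝ) < m - 1/2)
    (f : ℝ → ℝ) (hf : ContDiff ℝ 1 f)
    (hlim : Filter.Tendsto f Filter.atTop (nhds 0))
    (hint : Integrable (fun z => (deriv f z) ^ 2 * rho m α j z)
      (volume.restrict (Set.Ioi 0))) :
    ∀ y : ℝ, 0 ≤ y →
      Real.sqrt (rho m α j y / rho m α n y) * |f y - f 0|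
        ≤ Real.sqrt (1 / (2 * (m - (n : ℝ)) - 1)) *
          Real.sqrt (∫ z in Set.Ioi (0:ℝ), (deriv f z) ^ 2 * rho m α j z) :=
  stmt15_general m α hα n j hnj hn f hf hint
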